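/- Let I=⟨A,∅,R,R?⟩ be an AtIAF, S⊆A a set of arguments, and w₁,w₂∉A two distinct fresh arguments; let I'=⟨A∪{w₁}, {w₂}, R∪{(w₂,s) | s∈S}, R?∪{(w₁,w₂)}⟩. Then PosVer_pr(I,S)=true if and only if w₂∈RE⁻(I'−{(w₁,w₂)}, S∪{w₁}, (pr,true)). -/
import Mathlib


universe u

/-- An abstract argumentation framework: a set of arguments with an attack relation. -/
structure AF (α : Type u) where
  args : Set α
  att : Set (α × α)

namespace AF

variable {α : Type u}

/-- `S⁺_F`: arguments attacked by `S`. -/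
def plusSet (F : AF α) (S : Set α) : Set α := {a | a ∈ F.args ∧ ∃ b ∈ S, (b, a) ∈ F.att}

/-- `S⁻_F`: arguments attacking `S`. -/
def minusSet (F : AF α) (S : Set α) : Set α := {a | a ∈ F.args ∧ ∃ b ∈ S, (a, b) ∈ F.att}

/-- `S` is conflict-free in `F`. -/
def confFree (F : AF α) (S : Set α) : Prop := S ∩ F.plusSet S = ∅

/-- `S` defends `a` in `F`: every attacker of `a` is attacked by `S`. -/
def defends (F : AF α) (S : Set α) (a : α) : Prop := ∀ b, (b, a) ∈ F.att → b ∈ F.plusSet S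

/-- The characteristic function `Γ_F(S)`: arguments defended by `S`. -/
def Γ (F : AF α) (S : Set α) : Set α := {a | a ∈ F.args ∧ F.defends S a}

/-- Admissible: conflict-free and self-defending. -/
def isAd (F : AF α) (S : Set α) : Prop := S ⊆ F.args ∧ F.confFree S ∧ S ⊆ F.Γ S

/-- Stable: conflict-free and attacking exactly the outside. -/
def isSt (F : AF α) (S : Set α) : Prop := S ⊆ F.args ∧ F.confFree S ∧ F.plusSet S = F.args \ S

/-- Complete: admissible and containing all defended arguments. -/
def isCo (F : AF α) (S : Set α) : Prop := F.isAd S ∧ F.Γ S ⊆ S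

/-- Grounded: ⊆-minimal complete. -/
def isGr (F : AF α) (S : Set α) : Prop := F.isCo S ∧ ∀ T, F.isCo T → T ⊆ S → T = S

/-- Preferred: ⊆-maximal admissible. -/
def isPr (F : AF α) (S : Set α) : Prop := F.isAd S ∧ ∀ T, F.isAd T → S ⊆ T → S = T

end AF

/-- The five common semantics. -/
inductive Sem : Type
  | ad | st | co | gr | pr
deriving DecidableEq

/-- `S` is a `σ`-extension of `F`. -/
def extOf {α : Type u} : Sem → AF α → Set α → Prop
  | .ad => AF.isAd
  | .st => AF.isSt
  | .co => AF.isCo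
  | .gr => AF.isGr
  | .pr => AF.isPr

/-- An incomplete argumentation framework (data part). -/
structure IAF (α : Type u) where
  A : Set α
  Aq : Set α
  R : Set (α × α)
  Rq : Set (α × α)

namespace IAF

variable {α : Type u}

/-- Well-formedness: `A`,`A?` disjoint; `R`,`R?` disjoint subsets of `(A∪A?)×(A∪A?)`. -/
def WF (I : IAF α) : Prop :=
  Disjoint I.A I.Aq ∧ Disjoint I.R I.Rq ∧
  I.R ⊆ (I.A ∪ I.Aq) ×ˢ (I.A ∪ I.Aq) ∧
  I.Rq ⊆ (I.A ∪ I.Aq) ×ˢ (I.A ∪ I.Aq)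

/-- `cert(I)`: the AF projected on the certain part. -/
def cert (I : IAF α) : AF α := ⟨I.A, I.R ∩ I.A ×ˢ I.A⟩

/-- `I'` is a partial completion of `I`. -/
def PartOf (I' I : IAF α) : Prop :=
  I'.WF ∧ I.A ⊆ I'.A ∧ I'.A ⊆ I.A ∪ I.Aq ∧
  I.R ∩ (I'.A ∪ I'.Aq) ×ˢ (I'.A ∪ I'.Aq) ⊆ I'.R ∧
  I'.R ⊆ I.R ∪ I.Rq ∧ I'.Aq ⊆ I.Aq ∧ I'.Rq ⊆ I.Rq

/-- `F` is a completion of `I`. -/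
def IsCompletion (I : IAF α) (F : AF α) : Prop := ∃ I' : IAF α, I'.PartOf I ∧ F = I'.cert

/-- `I + R₀` for a set of uncertain attacks. -/
def addR (I : IAF α) (R0 : Set (α × α)) : IAF α := ⟨I.A, I.Aq, I.R ∪ R0, I.Rq \ R0⟩

/-- `I − R₀` for a set of uncertain attacks. -/
def subR (I : IAF α) (R0 : Set (α × α)) : IAF α := ⟨I.A, I.Aq, I.R, I.Rq \ R0⟩

/-- `I + A₀` for a set of uncertain arguments. -/
def addA (I : IAF α) (A0 : Set α) : IAF α := ⟨I.A ∪ A0, I.Aq \ A0, I.R, I.Rq⟩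

/-- `I − A₀` for a set of uncertain arguments. -/
def subA (I : IAF α) (A0 : Set α) : IAF α :=
  ⟨I.A, I.Aq \ A0,
   I.R \ {p | p ∈ I.R ∪ I.Rq ∧ (p.1 ∈ A0 ∨ p.2 ∈ A0)},
   I.Rq \ {p | p ∈ I.R ∪ I.Rq ∧ (p.1 ∈ A0 ∨ p.2 ∈ A0)}⟩

/-- `S⁺_I`. -/
def plusI (I : IAF α) (S : Set α) : Set α := {a | a ∈ I.A ∪ I.Aq ∧ ∃ b ∈ S, (b, a) ∈ I.R}

/-- `S⁻_I`. -/
def minusI (I : IAF α) (S : Set α) : Set α := {a | a ∈ I.A ∪ I.Aq ∧ ∃ b ∈ S, (a, b) ∈ I.R}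

/-- `S^∼_I`. -/
def simI (I : IAF α) (S : Set α) : Set α :=
  {a | a ∈ I.A ∪ I.Aq ∧ ∀ b ∈ S, (b, a) ∉ I.R ∪ I.Rq}

end IAF

/-- An element of an IAF: either an argument or an attack. -/
inductive Elem (α : Type u) : Type u
  | arg (a : α)
  | att (r : α × α)

/-- `e` is an uncertain element of `I`, i.e. `e ∈ A? ∪ R?`. -/
def IAF.isUnc {α : Type u} (I : IAF α) : Elem α → Prop
  | .arg a => a ∈ I.Aq
  | .att r => r ∈ I.Rq

/-- `I + {e}`. -/
def IAF.addE {α : Type u} (I : IAF α) : Elem α → IAF α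
  | .arg a => I.addA {a}
  | .att r => I.addR {r}

/-- `I − {e}`. -/
def IAF.subE {α : Type u} (I : IAF α) : Elem α → IAF α
  | .arg a => I.subA {a}
  | .att r => I.subR {r}

/-- `e` is the unique uncertain element of `I`, i.e. `A? ∪ R? = {e}`. -/
def onlyUnc {α : Type u} (I : IAF α) : Elem α → Prop
  | .arg a => I.Aq = {a} ∧ I.Rq = ∅
  | .att r => I.Aq = ∅ ∧ I.Rq = {r}

/-- A verification status: a semantics together with true/false. -/
abbrev VStatus := Sem × Bool

/-- `S` has verification status `j` in the AF `F`. -/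
def hasStatus {α : Type u} (F : AF α) (S : Set α) (j : VStatus) : Prop :=
  cond j.2 (extOf j.1 F S) (¬ extOf j.1 F S)

/-- `S` is stable-`j` w.r.t. `I`. -/
def IAF.stableJ {α : Type u} (I : IAF α) (S : Set α) (j : VStatus) : Prop :=
  ∀ F, I.IsCompletion F → hasStatus F S j

/-- `S` is stable-`σ` w.r.t. `I`. -/
def IAF.stableSem {α : Type u} (I : IAF α) (S : Set α) (σ : Sem) : Prop :=
  I.stableJ S (σ, true) ∨ I.stableJ S (σ, false)

/-- `RE⁺(I,S,j)`: uncertain elements whose addition is `j`-relevant for `S` w.r.t. `I`. -/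
def REplus {α : Type u} (I : IAF α) (S : Set α) (j : VStatus) : Set (Elem α) :=
  {e | I.isUnc e ∧ ∃ I' : IAF α, I'.PartOf I ∧ onlyUnc I' e ∧
    hasStatus (I'.addE e).cert S j ∧ ¬ hasStatus (I'.subE e).cert S j}

/-- `RE⁻(I,S,j)`: uncertain elements whose removal is `j`-relevant for `S` w.r.t. `I`. -/
def REminus {α : Type u} (I : IAF α) (S : Set α) (j : VStatus) : Set (Elem α) :=
  {e | I.isUnc e ∧ ∃ I' : IAF α, I'.PartOf I ∧ onlyUnc I' e ∧
    hasStatus (I'.subE e).cert S j ∧ ¬ hasStatus (I'.addE e).cert S j}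

/-- `e` is `σ`-irrelevant for `S` w.r.t. `I`. -/
def irrelevant {α : Type u} (I : IAF α) (S : Set α) (σ : Sem) (e : Elem α) : Prop :=
  e ∉ REplus I S (σ, true) ∧ e ∉ REminus I S (σ, true) ∧
  e ∉ REplus I S (σ, false) ∧ e ∉ REminus I S (σ, false)

/-- `PosVer_σ(I,S) = true`. -/
def PosVer {α : Type u} (σ : Sem) (I : IAF α) (S : Set α) : Prop :=
  ∃ F, I.IsCompletion F ∧ extOf σ F S

/-- `NecVer_σ(I,S) = true`. -/
def NecVer {α : Type u} (σ : Sem) (I : IAF α) (S : Set α) : Prop :=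
  ∀ F, I.IsCompletion F → extOf σ F S

/-- `SRE⁺(I,S,j)`: uncertain elements whose addition is strongly `j`-relevant. -/
def SREplus {α : Type u} (I : IAF α) (S : Set α) (j : VStatus) : Set (Elem α) :=
  {e | I.isUnc e ∧ ∀ I' : IAF α, I'.PartOf (I.subE e) → ¬ I'.stableJ S j}

/-- `SRE⁻(I,S,j)`: uncertain elements whose removal is strongly `j`-relevant. -/
def SREminus {α : Type u} (I : IAF α) (S : Set α) (j : VStatus) : Set (Elem α) :=
  {e | I.isUnc e ∧ ∀ I' : IAF α, I'.PartOf (I.addE e) → ¬ I'.stableJ S j}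

/-- The `OutRel(I,S,(a,b))` predicate. -/
def OutRel {α : Type u} (I : IAF α) (S : Set α) (r : α × α) : Prop :=
  (I.minusI {r.2} \ {r.1}) ∩ I.simI S = ∅ ∧
  PosVer Sem.co
    ((I.addR {p | p ∈ I.Rq ∧ p.1 ∈ S ∧ p.2 ∈ I.minusI {r.2} \ {r.1}}).subR
      {p | p ∈ I.Rq ∧ p.1 ≠ r.1 ∧ p.2 = r.2}) S


section Stmt11Aux

variable {α : Type u}

lemma plus_iso (A : Set α) (Rt : Set (α × α)) (hR : Rt ⊆ A ×ˢ A)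
    (w : α) (hw : w ∉ A) (T : Set α) :
    (AF.mk (A ∪ {w}) Rt).plusSet T = (AF.mk A Rt).plusSet (T \ {w}) := by
  ext a
  simp only [AF.plusSet, Set.mem_setOf_eq, Set.mem_union, Set.mem_singleton_iff,
    Set.mem_diff]
  constructor
  · rintro ⟨_, b, hb, hba⟩
    have h2 := hR hba
    rw [Set.mem_prod] at h2
    exact ⟨h2.2, b, ⟨hb, fun h => hw (h ▸ h2.1)⟩, hba⟩
  · rintro ⟨ha, b, ⟨hb, _⟩, hba⟩
    exact ⟨Or.inl ha, b, hb, hba⟩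

lemma plus_diff (A : Set α) (Rt : Set (α × α)) (hR : Rt ⊆ A ×ˢ A)
    (w : α) (hw : w ∉ A) (T : Set α) :
    (AF.mk A Rt).plusSet (T \ {w}) = (AF.mk A Rt).plusSet T := by
  ext a
  simp only [AF.plusSet, Set.mem_setOf_eq, Set.mem_diff, Set.mem_singleton_iff]
  constructor
  · rintro ⟨ha, b, ⟨hb, _⟩, hba⟩; exact ⟨ha, b, hb, hba⟩
  · rintro ⟨ha, b, hb, hba⟩
    have h2 := hR hba
    rw [Set.mem_prod] at h2
    exact ⟨ha, b, ⟨hb, fun h => hw (h ▸ h2.1)⟩, hba⟩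

lemma ad_diff (A : Set α) (Rt : Set (α × α)) (hR : Rt ⊆ A ×ˢ A)
    (w : α) (hw : w ∉ A) (T : Set α)
    (h : (AF.mk (A ∪ {w}) Rt).isAd T) : (AF.mk A Rt).isAd (T \ {w}) := by
  obtain ⟨hsub, hcf, hΓ⟩ := h
  have hplus := plus_iso A Rt hR w hw T
  refine ⟨?_, ?_, ?_⟩
  · rintro a ⟨haT, haw⟩
    rcases hsub haT with h | h
    · exact h
    · exact absurd h haw
  · apply Set.eq_empty_of_subset_empty
    rintro a ⟨⟨haT, _⟩, hap⟩
    rw [← hplus] at hap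
    have : a ∈ T ∩ (AF.mk (A ∪ {w}) Rt).plusSet T := ⟨haT, hap⟩
    rw [hcf] at this; exact this
  · rintro a ⟨haT, haw⟩
    obtain ⟨haA, hdef⟩ := hΓ haT
    refine ⟨?_, ?_⟩
    · rcases haA with h | h
      · exact h
      · exact absurd h haw
    · intro b hb
      have := hdef b hb
      rwa [hplus] at this

lemma ad_union (A : Set α) (Rt : Set (α × α)) (hR : Rt ⊆ A ×ˢ A)
    (w : α) (hw : w ∉ A) (U : Set α)
    (hU : (AF.mk A Rt).isAd U) : (AF.mk (A ∪ {w}) Rt).isAd (U ∪ {w}) := by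
  obtain ⟨hsub, hcf, hΓ⟩ := hU
  have hwU : w ∉ U := fun h => hw (hsub h)
  have hUd : (U ∪ {w}) \ {w} = U := by
    ext a
    simp only [Set.mem_diff, Set.mem_union, Set.mem_singleton_iff]
    constructor
    · rintro ⟨h | h, hne⟩
      · exact h
      · exact absurd h hne
    · intro h; exact ⟨Or.inl h, fun he => hwU (he ▸ h)⟩
  have hplus : (AF.mk (A ∪ {w}) Rt).plusSet (U ∪ {w}) = (AF.mk A Rt).plusSet U := by
    rw [plus_iso A Rt hR w hw, hUd]
  refine ⟨?_, ?_, ?_⟩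
  · rintro a (h | h)
    · exact Or.inl (hsub h)
    · exact Or.inr h
  · apply Set.eq_empty_of_subset_empty
    rintro a ⟨haU, hap⟩
    rw [hplus] at hap
    rcases haU with h | h
    · have : a ∈ U ∩ (AF.mk A Rt).plusSet U := ⟨h, hap⟩
      rw [hcf] at this; exact this
    · exact hw (h ▸ hap.1)
  · rintro a (h | h)
    · obtain ⟨haA, hdef⟩ := hΓ h
      refine ⟨Or.inl haA, fun b hb => ?_⟩
      rw [hplus]; exact hdef b hb
    · refine ⟨Or.inr h, fun b hb => ?_⟩
      exfalso
      have h2 := hR hb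
      rw [Set.mem_prod] at h2
      rw [Set.mem_singleton_iff] at h
      exact hw (by rw [← h]; exact h2.2)

lemma pr_iso (A : Set α) (Rt : Set (α × α)) (hR : Rt ⊆ A ×ˢ A)
    (w : α) (hw : w ∉ A) (S : Set α) (hS : S ⊆ A) :
    (AF.mk (A ∪ {w}) Rt).isPr (S ∪ {w}) ↔ (AF.mk A Rt).isPr S := by
  have hwS : w ∉ S := fun h => hw (hS h)
  have hSd : (S ∪ {w}) \ {w} = S := by
    ext a
    simp only [Set.mem_diff, Set.mem_union, Set.mem_singleton_iff]
    constructor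
    · rintro ⟨h | h, hne⟩
      · exact h
      · exact absurd h hne
    · intro h; exact ⟨Or.inl h, fun he => hwS (he ▸ h)⟩
  constructor
  · rintro ⟨hAd, hmax⟩
    have hAdS : (AF.mk A Rt).isAd S := by
      have := ad_diff A Rt hR w hw _ hAd
      rwa [hSd] at this
    refine ⟨hAdS, fun T hT hST => ?_⟩
    have hAdT := ad_union A Rt hR w hw T hT
    have heq := hmax (T ∪ {w}) hAdT (Set.union_subset_union_left _ hST)
    have hwT : w ∉ T := fun h => hw (hT.1 h)
    have hTd : (T ∪ {w}) \ {w} = T := by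
      ext a
      simp only [Set.mem_diff, Set.mem_union, Set.mem_singleton_iff]
      constructor
      · rintro ⟨h | h, hne⟩
        · exact h
        · exact absurd h hne
      · intro h; exact ⟨Or.inl h, fun he => hwT (he ▸ h)⟩
    calc S = (S ∪ {w}) \ {w} := hSd.symm
      _ = (T ∪ {w}) \ {w} := by rw [heq]
      _ = T := hTd
  · rintro ⟨hAd, hmax⟩
    refine ⟨ad_union A Rt hR w hw S hAd, fun T hT hST => ?_⟩
    have hAdT := ad_diff A Rt hR w hw T hT
    have hST' : S ⊆ T \ {w} := by
      intro a ha
      exact ⟨hST (Or.inl ha), fun h => hwS (h ▸ ha)⟩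
    have hEq := hmax (T \ {w}) hAdT hST'
    have hwT : w ∈ T := hST (Or.inr rfl)
    apply Set.Subset.antisymm hST
    intro a ha
    by_cases h : a = w
    · exact Or.inr h
    · have : a ∈ T \ {w} := ⟨ha, h⟩
      rw [← hEq] at this
      exact Or.inl this

lemma not_pr_aug (A : Set α) (Rt : Set (α × α)) (hR : Rt ⊆ A ×ˢ A)
    (S : Set α) (hS : S ⊆ A) (w1 w2 : α) (hw1 : w1 ∉ A) (hw2 : w2 ∉ A)
    (hne : w1 ≠ w2) :
    ¬ (AF.mk (A ∪ {w1} ∪ {w2})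
        (Rt ∪ {p | ∃ s ∈ S, p = (w2, s)})).isPr (S ∪ {w1}) := by
  rintro ⟨⟨hsub, hcf, hΓ⟩, hmax⟩
  by_cases hSe : S.Nonempty
  · obtain ⟨s, hs⟩ := hSe
    obtain ⟨-, hdef⟩ := hΓ (Or.inl hs)
    have hw2att : (w2, s) ∈ Rt ∪ {p | ∃ s ∈ S, p = (w2, s)} :=
      Or.inr ⟨s, hs, rfl⟩
    obtain ⟨-, b, hb, hbw2⟩ := hdef w2 hw2att
    rcases hbw2 with h | h
    · have h2 := hR h
      rw [Set.mem_prod] at h2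
      exact hw2 h2.2
    · obtain ⟨s', hs', he⟩ := h
      have : w2 = s' := congrArg Prod.snd he
      exact hw2 (this ▸ hS hs')
  · have hSempty : S = ∅ := Set.not_nonempty_iff_eq_empty.mp hSe
    subst hSempty
    have hAdT : (AF.mk (A ∪ {w1} ∪ {w2})
        (Rt ∪ {p | ∃ s ∈ (∅ : Set α), p = (w2, s)})).isAd (∅ ∪ {w1} ∪ {w2}) := by
      refine ⟨?_, ?_, ?_⟩
      · rintro a ((h | h) | h)
        · exact h.elim
        · exact Or.inl (Or.inr h)
        · exact Or.inr h
      · apply Set.eq_empty_of_subset_empty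
        rintro a ⟨_, _, b, hb, hba⟩
        rcases hba with h | h
        · have h2 := hR h
          rw [Set.mem_prod] at h2
          rcases hb with (hb | hb) | hb
          · exact hb
          · exact hw1 (hb ▸ h2.1)
          · exact hw2 (hb ▸ h2.1)
        · obtain ⟨s', hs', -⟩ := h
          exact hs'
      · rintro a ha
        refine ⟨?_, fun b hb => ?_⟩
        · rcases ha with (h | h) | h
          · exact h.elim
          · exact Or.inl (Or.inr h)
          · exact Or.inr h
        exfalso
        rcases hb with h | h
        · have h2 := hR h
          rw [Set.mem_prod] at h2
          rcases ha with (ha | ha) | ha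
          · exact ha
          · exact hw1 (ha ▸ h2.2)
          · exact hw2 (ha ▸ h2.2)
        · obtain ⟨s', hs', -⟩ := h
          exact hs'
    have heq := hmax _ hAdT (by
      rintro a (h | h)
      · exact Or.inl (Or.inl h)
      · exact Or.inl (Or.inr h))
    have hw2mem : w2 ∈ (∅ : Set α) ∪ {w1} ∪ {w2} := Or.inr rfl
    rw [← heq] at hw2mem
    rcases hw2mem with h | h
    · exact h
    · exact hne (h.symm)

lemma cert_sub_eq (I : IAF α) (S : Set α) (w1 w2 : α)
    (hRA : I.R ⊆ I.A ×ˢ I.A) (hRqA : I.Rq ⊆ I.A ×ˢ I.A)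
    (hw2 : w2 ∉ I.A)
    (I'' : IAF α) (hA : I''.A = I.A ∪ {w1}) (_hRq : I''.Rq = ∅)
    (hup : I''.R ⊆ I.R ∪ {p | ∃ s ∈ S, p = (w2, s)} ∪ I.Rq) :
    (I''.subA {w2}).cert = AF.mk (I.A ∪ {w1}) (I''.R ∩ I.A ×ˢ I.A) := by
  simp only [IAF.cert, IAF.subA, hA]
  congr 1
  ext p
  constructor
  · rintro ⟨⟨hpR, hBad⟩, _⟩
    refine ⟨hpR, ?_⟩
    rcases hup hpR with (h | h) | h
    · exact hRA h
    · exfalso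
      obtain ⟨s, hs, rfl⟩ := h
      exact hBad ⟨Or.inl hpR, Or.inl rfl⟩
    · exact hRqA h
  · rintro ⟨hpR, hsq⟩
    rw [Set.mem_prod] at hsq
    refine ⟨⟨hpR, ?_⟩, ?_⟩
    · rintro ⟨-, h | h⟩
      · exact hw2 (h ▸ hsq.1)
      · exact hw2 (h ▸ hsq.2)
    · rw [Set.mem_prod]
      exact ⟨Or.inl hsq.1, Or.inl hsq.2⟩

lemma cert_add_eq (I : IAF α) (S : Set α) (hS : S ⊆ I.A) (w1 w2 : α)
    (hRA : I.R ⊆ I.A ×ˢ I.A) (hRqA : I.Rq ⊆ I.A ×ˢ I.A)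
    (I'' : IAF α) (hA : I''.A = I.A ∪ {w1})
    (hup : I''.R ⊆ I.R ∪ {p | ∃ s ∈ S, p = (w2, s)} ∪ I.Rq) :
    (I''.addA {w2}).cert = AF.mk (I.A ∪ {w1} ∪ {w2}) I''.R := by
  simp only [IAF.cert, IAF.addA, hA]
  congr 1
  apply Set.inter_eq_left.mpr
  intro p hp
  rw [Set.mem_prod]
  rcases hup hp with (h | h) | h
  · have h2 := hRA h
    rw [Set.mem_prod] at h2
    exact ⟨Or.inl (Or.inl h2.1), Or.inl (Or.inl h2.2)⟩
  · obtain ⟨s, hs, rfl⟩ := h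
    exact ⟨Or.inr rfl, Or.inl (Or.inl (hS hs))⟩
  · have h2 := hRqA h
    rw [Set.mem_prod] at h2
    exact ⟨Or.inl (Or.inl h2.1), Or.inl (Or.inl h2.2)⟩

end Stmt11Aux

/-- reduction from `PosVer_pr` to `(pr,true)`-relevance of removal. -/
theorem stmt11 {α : Type u} (I : IAF α) (S : Set α) (w1 w2 : α)
    (hWF : I.WF) (hAt : I.Aq = ∅) (hS : S ⊆ I.A)
    (hw1 : w1 ∉ I.A) (hw2 : w2 ∉ I.A) (hne : w1 ≠ w2)
    (I' : IAF α)
    (hI' : I' = ⟨I.A ∪ {w1}, {w2}, I.R ∪ {p | ∃ s ∈ S, p = (w2, s)},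
      I.Rq ∪ {(w1, w2)}⟩) :
    PosVer Sem.pr I S ↔
      Elem.arg w2 ∈ REminus (I'.subR {(w1, w2)}) (S ∪ {w1}) (Sem.pr, true) := by
  obtain ⟨hdA, hdR, hRsub, hRqsub⟩ := hWF
  have hRA : I.R ⊆ I.A ×ˢ I.A := by rwa [hAt, Set.union_empty] at hRsub
  have hRqA : I.Rq ⊆ I.A ×ˢ I.A := by rwa [hAt, Set.union_empty] at hRqsub
  -- the "J" frame
  have hJ : I'.subR {(w1, w2)} =
      (⟨I.A ∪ {w1}, {w2}, I.R ∪ {p | ∃ s ∈ S, p = (w2, s)}, I.Rq⟩ : IAF α) := by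
    subst hI'
    simp only [IAF.subR]
    congr 1
    ext p
    simp only [Set.mem_diff, Set.mem_union, Set.mem_singleton_iff]
    constructor
    · rintro ⟨h | h, hne⟩
      · exact h
      · exact absurd h hne
    · intro hp
      refine ⟨Or.inl hp, fun he => ?_⟩
      have h2 := hRqA hp
      rw [Set.mem_prod] at h2
      rw [he] at h2
      exact hw1 h2.1
  rw [hJ]
  set Sset : Set (α × α) := {p | ∃ s ∈ S, p = (w2, s)} with hSset
  set J : IAF α := ⟨I.A ∪ {w1}, {w2}, I.R ∪ Sset, I.Rq⟩ with hJdef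
  constructor
  · -- forward direction
    rintro ⟨F, ⟨I₀, hP, rfl⟩, hpr⟩
    obtain ⟨hWF₀, hA₀l, hA₀u, hR₀l, hR₀u, hAq₀, hRq₀⟩ := hP
    have hA₀ : I₀.A = I.A := by
      apply Set.Subset.antisymm _ hA₀l
      rwa [hAt, Set.union_empty] at hA₀u
    have hR₀ : I.R ⊆ I₀.R := by
      intro p hp
      apply hR₀l
      refine ⟨hp, ?_⟩
      have h2 := hRA hp
      rw [Set.mem_prod] at h2
      rw [Set.mem_prod]
      exact ⟨Or.inl (hA₀l h2.1), Or.inl (hA₀l h2.2)⟩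
    set Rx : Set (α × α) := I₀.R ∩ I.A ×ˢ I.A with hRx
    have hRRx : I.R ⊆ Rx := fun p hp => ⟨hR₀ hp, hRA hp⟩
    have hRxup : Rx ⊆ I.R ∪ I.Rq := fun p hp => hR₀u hp.1
    have hRxA : Rx ⊆ I.A ×ˢ I.A := Set.inter_subset_right
    have hcert₀ : I₀.cert = AF.mk I.A Rx := by
      simp only [IAF.cert, hA₀, hRx]
    have hprF : AF.isPr (AF.mk I.A Rx) S := by rwa [hcert₀] at hpr
    refine ⟨rfl, ⟨I.A ∪ {w1}, {w2}, Rx ∪ Sset, ∅⟩, ?_, ⟨rfl, rfl⟩, ?_, ?_⟩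
    · -- PartOf J
      refine ⟨⟨?_, ?_, ?_, ?_⟩, subset_rfl, Set.subset_union_left, ?_, ?_, subset_rfl,
        Set.empty_subset _⟩
      · rw [Set.disjoint_singleton_right]
        rintro (h | h)
        · exact hw2 h
        · exact hne h.symm
      · exact Set.disjoint_empty _
      · rintro p (hp | hp)
        · have h2 := hRxA hp
          rw [Set.mem_prod] at h2
          rw [Set.mem_prod]
          exact ⟨Or.inl (Or.inl h2.1), Or.inl (Or.inl h2.2)⟩
        · obtain ⟨s, hs, rfl⟩ := hp
          rw [Set.mem_prod]
          exact ⟨Or.inr rfl, Or.inl (Or.inl (hS hs))⟩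
      · exact Set.empty_subset _
      · rintro p ⟨hp, -⟩
        rcases hp with h | h
        · exact Or.inl (hRRx h)
        · exact Or.inr h
      · rintro p (hp | hp)
        · rcases hRxup hp with h | h
          · exact Or.inl (Or.inl h)
          · exact Or.inr h
        · exact Or.inl (Or.inr hp)
    · -- status in the "sub" completion
      have hcs := cert_sub_eq I S w1 w2 hRA hRqA hw2
        ⟨I.A ∪ {w1}, {w2}, Rx ∪ Sset, ∅⟩ rfl rfl
        (by
          rintro p (hp | hp)
          · rcases hRxup hp with h | h
            · exact Or.inl (Or.inl h)
            · exact Or.inr h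
          · exact Or.inl (Or.inr hp))
      have hRI : (Rx ∪ Sset) ∩ I.A ×ˢ I.A = Rx := by
        ext p
        constructor
        · rintro ⟨hp | hp, hsq⟩
          · exact hp
          · exfalso
            obtain ⟨s, hs, rfl⟩ := hp
            rw [Set.mem_prod] at hsq
            exact hw2 hsq.1
        · intro hp
          exact ⟨Or.inl hp, hRxA hp⟩
      show AF.isPr _ _
      show AF.isPr ((IAF.subA ⟨I.A ∪ {w1}, {w2}, Rx ∪ Sset, ∅⟩ {w2}).cert) (S ∪ {w1})
      rw [hcs, hRI]
      exact (pr_iso I.A Rx hRxA w1 hw1 S hS).mpr hprF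
    · -- ¬ status in the "add" completion
      intro hcon
      have hca := cert_add_eq I S hS w1 w2 hRA hRqA
        ⟨I.A ∪ {w1}, {w2}, Rx ∪ Sset, ∅⟩ rfl
        (by
          rintro p (hp | hp)
          · rcases hRxup hp with h | h
            · exact Or.inl (Or.inl h)
            · exact Or.inr h
          · exact Or.inl (Or.inr hp))
      have hcon' : AF.isPr ((IAF.addA ⟨I.A ∪ {w1}, {w2}, Rx ∪ Sset, ∅⟩ {w2}).cert)
          (S ∪ {w1}) := hcon
      rw [hca] at hcon'
      exact not_pr_aug I.A Rx hRxA S hS w1 w2 hw1 hw2 hne hcon'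
  · -- backward direction
    rintro ⟨-, I'', hP, ⟨hAq'', hRq''⟩, hSubSt, -⟩
    obtain ⟨hWF'', hA''l, hA''u, hR''l, hR''u, hAq''s, hRq''s⟩ := hP
    have hw2A'' : w2 ∉ I''.A := by
      intro h
      exact Set.disjoint_left.mp hWF''.1 h (by rw [hAq'']; rfl)
    have hA'' : I''.A = I.A ∪ {w1} := by
      apply Set.Subset.antisymm
      · intro a ha
        rcases hA''u ha with h | h
        · exact h
        · exact absurd (h ▸ ha) (h ▸ hw2A'')
      · exact hA''l
    have hRup : I''.R ⊆ I.R ∪ Sset ∪ I.Rq := hR''u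
    have hRlow : I.R ⊆ I''.R := by
      intro p hp
      apply hR''l
      refine ⟨Or.inl hp, ?_⟩
      have h2 := hRA hp
      rw [Set.mem_prod] at h2
      rw [Set.mem_prod, hA'', hAq'']
      exact ⟨Or.inl (Or.inl h2.1), Or.inl (Or.inl h2.2)⟩
    set Rx : Set (α × α) := I''.R ∩ I.A ×ˢ I.A with hRx
    have hRRx : I.R ⊆ Rx := fun p hp => ⟨hRlow hp, hRA hp⟩
    have hRxA : Rx ⊆ I.A ×ˢ I.A := Set.inter_subset_right
    have hcs := cert_sub_eq I S w1 w2 hRA hRqA hw2 I'' hA'' hRq'' hRup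
    have hSubSt' : AF.isPr ((I''.subA {w2}).cert) (S ∪ {w1}) := hSubSt
    rw [hcs] at hSubSt'
    have hprF : AF.isPr (AF.mk I.A Rx) S :=
      (pr_iso I.A Rx hRxA w1 hw1 S hS).mp hSubSt'
    refine ⟨AF.mk I.A Rx, ⟨⟨I.A, ∅, Rx, ∅⟩, ?_, ?_⟩, hprF⟩
    · refine ⟨⟨Set.disjoint_empty _, Set.disjoint_empty _, ?_, Set.empty_subset _⟩,
        subset_rfl, Set.subset_union_left, ?_, ?_, Set.empty_subset _,
        Set.empty_subset _⟩
      · intro p hp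
        have h2 := hRxA hp
        rw [Set.mem_prod] at h2
        rw [Set.mem_prod]
        exact ⟨Or.inl h2.1, Or.inl h2.2⟩
      · rintro p ⟨hp, -⟩
        exact hRRx hp
      · intro p hp
        rcases hRup hp.1 with (h | h) | h
        · exact Or.inl h
        · exfalso
          obtain ⟨s, hs, rfl⟩ := h
          have h2 := hp.2
          rw [Set.mem_prod] at h2
          exact hw2 h2.1
        · exact Or.inr h
    · simp only [IAF.cert]
      exact congrArg (AF.mk I.A) (Set.inter_eq_left.mpr hRxA).symm
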